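/- Let M be a loopless matroid on a nonempty finite ground set E with rank function r, and let γ(M) be its density. If X and Y are nonempty subsets of E each attaining the maximum density, i.e., |X| = γ(M) · r(X) and |Y| = γ(M) · r(Y), then X ∪ Y also attains the maximum density: |X ∪ Y| = γ(M) · r(X ∪ Y). Consequently, M has a unique maximal densest subset. -/
import Mathlib


/-- A matroid on a finite ground set `E`, given by its rank function `r`,
where `r X` is the size of a largest independent subset of `X`. -/
structure FinMatroid (α : Type*) [DecidableEq α] where
  E : Finset α
  r : Finset α → ℕ
  r_empty : r ∅ = 0
  r_le_card : ∀ X : Finset α, r X ≤ X.card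
  r_mono : ∀ ⦃X Y : Finset α⦄, X ⊆ Y → r X ≤ r Y
  r_submod : ∀ X Y : Finset α, r (X ∪ Y) + r (X ∩ Y) ≤ r X + r Y

/-- A matroid is loopless if every singleton of the ground set is independent. -/
def FinMatroid.Loopless {α : Type*} [DecidableEq α] (M : FinMatroid α) : Prop :=
  ∀ e ∈ M.E, M.r {e} = 1

lemma finmatroid_rank_pos {α : Type*} [DecidableEq α] (M : FinMatroid α)
    (hloop : M.Loopless) {Z : Finset α} (hZE : Z ⊆ M.E) (hZ0 : Z.Nonempty) :
    1 ≤ M.r Z := by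
  obtain ⟨e, he⟩ := hZ0
  have h1 : M.r {e} = 1 := hloop e (hZE he)
  have h2 : M.r {e} ≤ M.r Z := M.r_mono (Finset.singleton_subset_iff.2 he)
  omega

lemma finmatroid_den_le {α : Type*} [DecidableEq α] (M : FinMatroid α)
    (hloop : M.Loopless) (γ : ℝ)
    (hγ : IsGreatest
      {d : ℝ | ∃ Z : Finset α, Z ⊆ M.E ∧ Z.Nonempty ∧
        d = (Z.card : ℝ) / (M.r Z : ℝ)} γ)
    {Z : Finset α} (hZE : Z ⊆ M.E) (hZ0 : Z.Nonempty) :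
    (Z.card : ℝ) ≤ γ * (M.r Z : ℝ) := by
  have hr : (0 : ℝ) < (M.r Z : ℝ) := by
    exact_mod_cast finmatroid_rank_pos M hloop hZE hZ0
  have := hγ.2 ⟨Z, hZE, hZ0, rfl⟩
  rw [div_le_iff₀ hr] at this
  linarith

lemma finmatroid_gamma_nonneg {α : Type*} [DecidableEq α] (M : FinMatroid α)
    (hloop : M.Loopless) (hE : M.E.Nonempty) (γ : ℝ)
    (hγ : IsGreatest
      {d : ℝ | ∃ Z : Finset α, Z ⊆ M.E ∧ Z.Nonempty ∧
        d = (Z.card : ℝ) / (M.r Z : ℝ)} γ) : (0 : ℝ) ≤ γ := by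
  obtain ⟨e, he⟩ := hE
  have h := hγ.2 ⟨{e}, Finset.singleton_subset_iff.2 he, ⟨e, Finset.mem_singleton_self e⟩, rfl⟩
  have h1 : M.r {e} = 1 := hloop e he
  rw [h1] at h
  simp at h
  linarith

lemma finmatroid_union_densest {α : Type*} [DecidableEq α] (M : FinMatroid α)
    (hloop : M.Loopless) (hE : M.E.Nonempty) (γ : ℝ)
    (hγ : IsGreatest
      {d : ℝ | ∃ Z : Finset α, Z ⊆ M.E ∧ Z.Nonempty ∧
        d = (Z.card : ℝ) / (M.r Z : ℝ)} γ)
    {X Y : Finset α} (hXE : X ⊆ M.E) (hX0 : X.Nonempty)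
    (hYE : Y ⊆ M.E) (hY0 : Y.Nonempty)
    (hX : (X.card : ℝ) = γ * (M.r X : ℝ)) (hY : (Y.card : ℝ) = γ * (M.r Y : ℝ)) :
    ((X ∪ Y).card : ℝ) = γ * (M.r (X ∪ Y) : ℝ) := by
  have hγ0 : (0:ℝ) ≤ γ := finmatroid_gamma_nonneg M hloop hE γ hγ
  have hUE : X ∪ Y ⊆ M.E := Finset.union_subset hXE hYE
  have hU0 : (X ∪ Y).Nonempty := hX0.mono Finset.subset_union_left
  have hUle : ((X ∪ Y).card : ℝ) ≤ γ * (M.r (X ∪ Y) : ℝ) :=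
    finmatroid_den_le M hloop γ hγ hUE hU0
  have hIle : ((X ∩ Y).card : ℝ) ≤ γ * (M.r (X ∩ Y) : ℝ) := by
    rcases (X ∩ Y).eq_empty_or_nonempty with h | h
    · rw [h, M.r_empty]; simp
    · exact finmatroid_den_le M hloop γ hγ
        ((Finset.inter_subset_left).trans hXE) h
  have hcard : (X ∪ Y).card + (X ∩ Y).card = X.card + Y.card :=
    Finset.card_union_add_card_inter X Y
  have hcardR : ((X ∪ Y).card : ℝ) + ((X ∩ Y).card : ℝ) = (X.card : ℝ) + (Y.card : ℝ) := by
    exact_mod_cast hcard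
  have hsub : (M.r (X ∪ Y) : ℝ) + (M.r (X ∩ Y) : ℝ) ≤ (M.r X : ℝ) + (M.r Y : ℝ) := by
    exact_mod_cast M.r_submod X Y
  nlinarith [mul_le_mul_of_nonneg_left hsub hγ0]

/-- In a loopless matroid with density `γ` (the maximum of `|X|/r(X)` over nonempty
`X ⊆ E`), if nonempty sets `X, Y ⊆ E` both attain the maximum density, then so does
`X ∪ Y`. Consequently, there is a unique maximal densest subset. -/
theorem stmt19 {α : Type*} [DecidableEq α] (M : FinMatroid α)
    (hloop : M.Loopless) (hE : M.E.Nonempty) (γ : ℝ)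
    (hγ : IsGreatest
      {d : ℝ | ∃ Z : Finset α, Z ⊆ M.E ∧ Z.Nonempty ∧
        d = (Z.card : ℝ) / (M.r Z : ℝ)} γ)
    (X Y : Finset α) (hXE : X ⊆ M.E) (hX0 : X.Nonempty)
    (hYE : Y ⊆ M.E) (hY0 : Y.Nonempty)
    (hX : (X.card : ℝ) = γ * (M.r X : ℝ)) (hY : (Y.card : ℝ) = γ * (M.r Y : ℝ)) :
    ((X ∪ Y).card : ℝ) = γ * (M.r (X ∪ Y) : ℝ) ∧
    ∃! Z : Finset α, Z ⊆ M.E ∧ Z.Nonempty ∧ ((Z.card : ℝ) = γ * (M.r Z : ℝ)) ∧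
      ∀ W ⊆ M.E, W.Nonempty → ((W.card : ℝ) = γ * (M.r W : ℝ)) → W ⊆ Z := by
  classical
  set P : Finset α → Prop := fun Z => Z ⊆ M.E ∧ Z.Nonempty ∧ ((Z.card : ℝ) = γ * (M.r Z : ℝ))
    with hP
  have key : ∀ A B, P A → P B → P (A ∪ B) := by
    rintro A B ⟨hAE, hA0, hA⟩ ⟨hBE, hB0, hB⟩
    exact ⟨Finset.union_subset hAE hBE, hA0.mono Finset.subset_union_left,
      finmatroid_union_densest M hloop hE γ hγ hAE hA0 hBE hB0 hA hB⟩
  refine ⟨(finmatroid_union_densest M hloop hE γ hγ hXE hX0 hYE hY0 hX hY), ?_⟩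
  set S : Finset (Finset α) := M.E.powerset.filter P with hS
  have hmemS : ∀ Z, Z ∈ S ↔ P Z := by
    intro Z
    simp only [hS, Finset.mem_filter, Finset.mem_powerset]
    exact ⟨fun h => h.2, fun h => ⟨h.1, h⟩⟩
  have hSne : S.Nonempty := ⟨X, (hmemS X).2 ⟨hXE, hX0, hX⟩⟩
  have hsup : ∀ T : Finset (Finset α), T.Nonempty → (∀ A ∈ T, P A) → P (T.sup id) := by
    intro T hTne
    induction hTne using Finset.Nonempty.cons_induction with
    | singleton a => intro h; simpa using h a (by simp)
    | cons a T ha hT ih =>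
        intro h
        rw [Finset.sup_cons]
        exact key a (T.sup id) (h a (Finset.mem_cons_self a T))
          (ih (fun A hA => h A (Finset.mem_cons_of_mem hA)))
  have hZ0 : P (S.sup id) := hsup S hSne (fun A hA => (hmemS A).1 hA)
  have hmax : ∀ W ⊆ M.E, W.Nonempty → ((W.card : ℝ) = γ * (M.r W : ℝ)) → W ⊆ S.sup id := by
    intro W hWE hW0 hW
    exact Finset.le_sup (f := id) ((hmemS W).2 ⟨hWE, hW0, hW⟩)
  refine ⟨S.sup id, ⟨hZ0.1, hZ0.2.1, hZ0.2.2, hmax⟩, ?_⟩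
  rintro Z' ⟨hZ'E, hZ'0, hZ', hmax'⟩
  exact Finset.Subset.antisymm (hmax Z' hZ'E hZ'0 hZ')
    (hmax' (S.sup id) hZ0.1 hZ0.2.1 hZ0.2.2)
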